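/- arXiv:1005.3448 — 5 statements merged into one kernel-verified Lean document; each statement's English description precedes it below -/
import Mathlib

section
/- Let u, v be elements of a commutative ring containing t with v^2 - 2tuv - u^2 = -(t^2+1)^2. Set x = v^2 - 2tuv + 6v - 6tu + (t^4 + 5t^2 + 4) and y = -2tv^3 + (4t^2+1)uv^2 - 9tv^2 + (18t^2+9)uv + (-2t^5-4t^3-2t)v + (t^4+20t^2+19)u + (-9t^5-18t^3-9t). Then x^3 - y^2 = -27(t^2+1)^2(2v - 2tu + 11t^2 + 11). -/
theorem stmt_5 {R : Type*} [CommRing R] (t u v : R)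
    (h : v^2 - 2*t*u*v - u^2 = -(t^2 + 1)^2)
    (x y : R)
    (hx : x = v^2 - 2*t*u*v + 6*v - 6*t*u + (t^4 + 5*t^2 + 4))
    (hy : y = -2*t*v^3 + (4*t^2 + 1)*u*v^2 - 9*t*v^2 + (18*t^2 + 9)*u*v
        + (-2*t^5 - 4*t^3 - 2*t)*v + (t^4 + 20*t^2 + 19)*u + (-9*t^5 - 18*t^3 - 9*t)) :
    x^3 - y^2 = -27 * (t^2 + 1)^2 * (2*v - 2*t*u + 11*t^2 + 11) := by
  subst hx hy
  linear_combination (361 + 342*v + 119*v^2 + 18*v^3 + v^4 + 328*t^2 + 108*t^2*v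
    - 72*t^2*v^2 - 36*t^2*v^3 - 4*t^2*v^4 + 216*t^3*u + 216*t^3*u*v + 72*t^3*u*v^2
    + 8*t^3*u*v^3 - 102*t^4 - 54*t^4*v - 6*t^4*v^2 - 68*t^6 - 36*t^6*v - 4*t^6*v^2
    + t^8) * h
end

section
/- Let x = (t/9)(t^9 + 6t^6 + 15t^3 + 12) and y = (1/54)(2t^{15} + 18t^{12} + 72t^9 + 144t^6 + 135t^3 + 27) in ℚ[t]. Then x^3 - y^2 = -(1/108)(3t^6 + 14t^3 + 27). -/
open Polynomial

theorem stmt_10 (x y : Polynomial ℚ)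
    (hx : x = C (1/9) * X * (X^9 + 6*X^6 + 15*X^3 + 12))
    (hy : y = C (1/54) * (2*X^15 + 18*X^12 + 72*X^9 + 144*X^6 + 135*X^3 + 27)) :
    x^3 - y^2 = -(C (1/108)) * (3*X^6 + 14*X^3 + 27) := by
  subst hx hy
  have e1 : (C (1/9 : ℚ) : ℚ[X])^3 = C (1/2916) * 4 := by
    rw [← C_pow, show ((4:ℚ[X]) = C 4) from by norm_cast, ← C_mul]; norm_num
  have e2 : (C (1/54 : ℚ) : ℚ[X])^2 = C (1/2916) := by
    rw [← C_pow]; norm_num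
  have e3 : (C (1/108 : ℚ) : ℚ[X]) = C (1/2916) * 27 := by
    rw [show ((27:ℚ[X]) = C 27) from by norm_cast, ← C_mul]; norm_num
  rw [show (C (1/9:ℚ) * X * (X^9 + 6*X^6 + 15*X^3 + 12))^3
      = C (1/9:ℚ)^3 * (X * (X^9 + 6*X^6 + 15*X^3 + 12))^3 from by ring,
    show (C (1/54:ℚ) * (2*X^15 + 18*X^12 + 72*X^9 + 144*X^6 + 135*X^3 + 27))^2
      = C (1/54:ℚ)^2 * (2*X^15 + 18*X^12 + 72*X^9 + 144*X^6 + 135*X^3 + 27)^2 from by ring,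
    e1, e2, e3]
  ring
end

section
/- Define a_1 = 0, a_2 = t^2+1, a_m = 2t·a_{m-1} + a_{m-2} in ℤ[t], and for odd k ≥ 3 set u = a_{k-1}, v = a_k, x = v^2 - 2tuv + 6v - 6tu + (t^4+5t^2+4), y = -2tv^3 + (4t^2+1)uv^2 - 9tv^2 + (18t^2+9)uv + (-2t^5-4t^3-2t)v + (t^4+20t^2+19)u + (-9t^5-18t^3-9t). Then deg(x^3 - y^2) = k + 4. -/
open Polynomial

theorem stmt_15 (a : ℕ → Polynomial ℤ)
    (h1 : a 1 = 0) (h2 : a 2 = X^2 + 1)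
    (hrec : ∀ m, 3 ≤ m → a m = 2 * X * a (m - 1) + a (m - 2))
    (k : ℕ) (hk : 3 ≤ k) (hodd : Odd k)
    (u v x y : Polynomial ℤ) (hu : u = a (k - 1)) (hv : v = a k)
    (hx : x = v^2 - 2*X*u*v + 6*v - 6*X*u + (X^4 + 5*X^2 + 4))
    (hy : y = -2*X*v^3 + (4*X^2 + 1)*u*v^2 - 9*X*v^2 + (18*X^2 + 9)*u*v
        + (-2*X^5 - 4*X^3 - 2*X)*v + (X^4 + 20*X^2 + 19)*u + (-9*X^5 - 18*X^3 - 9*X)) :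
    (x^3 - y^2).natDegree = k + 4 := by
  -- a 3 explicitly
  have h3 : a 3 = 2*X^3 + 2*X := by
    have h := hrec 3 (by norm_num)
    simp only [show (3:ℕ)-1 = 2 from rfl, show (3:ℕ)-2 = 1 from rfl, h1, h2] at h
    rw [h]; ring
  -- degree and leading coefficient of a (n+2)
  have hdc : ∀ n : ℕ, (a (n+2)).natDegree ≤ n+2 ∧ (a (n+2)).coeff (n+2) = 2^n := by
    intro n
    induction n using Nat.strong_induction_on with
    | _ n ih =>
      match n with
      | 0 => rw [h2]; refine ⟨by compute_degree, by simp [coeff_one]⟩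
      | 1 => rw [show (1:ℕ)+2 = 3 from rfl, h3]
             exact ⟨by compute_degree, by simp [coeff_X_pow, coeff_X]⟩
      | (m+2) =>
        have hrm : a (m+4) = 2*X*a (m+3) + a (m+2) := by
          have h := hrec (m+4) (by omega)
          simpa [show m+4-1 = m+3 from by omega, show m+4-2 = m+2 from by omega] using h
        obtain ⟨ihd1, ihc1⟩ := ih (m+1) (by omega)
        rw [show m+1+2 = m+3 from rfl] at ihd1 ihc1
        obtain ⟨ihd0, ihc0⟩ := ih m (by omega)
        constructor
        · rw [hrm]
          refine le_trans (natDegree_add_le _ _) (max_le ?_ (by omega))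
          calc (2*X*a (m+3)).natDegree ≤ (2*X:Polynomial ℤ).natDegree + (a (m+3)).natDegree :=
                natDegree_mul_le
            _ ≤ 1 + (m+3) := by
                have : (2*X:Polynomial ℤ).natDegree ≤ 1 := by compute_degree
                omega
            _ ≤ m+4 := by omega
        · rw [hrm, coeff_add, mul_assoc, coeff_ofNat_mul,
            show m+2+2 = (m+3)+1 from by omega, coeff_X_mul]
          rw [ihc1, coeff_eq_zero_of_natDegree_lt (lt_of_le_of_lt ihd0 (by omega))]
          ring
  -- Pell-type relation
  have hpell : ∀ n : ℕ, (a (n+3))^2 - 2*X*(a (n+2))*(a (n+3)) - (a (n+2))^2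
      = (-1)^(n+3) * (X^2+1)^2 := by
    intro n
    induction n with
    | zero => rw [h2, h3]; ring
    | succ m ih =>
      have hrm : a (m+4) = 2*X*a (m+3) + a (m+2) := by
        have h := hrec (m+4) (by omega)
        simpa [show m+4-1 = m+3 from by omega, show m+4-2 = m+2 from by omega] using h
      rw [show m+1+3 = m+4 from rfl, show m+1+2 = m+3 from rfl, hrm]
      linear_combination (-1 : Polynomial ℤ) * ih
  obtain ⟨n, rfl⟩ : ∃ n, k = n + 3 := ⟨k - 3, by omega⟩
  have hun : u = a (n+2) := hu
  have hvn : v = a (n+3) := hv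
  -- the Pell relation for (u,v), with sign -1 since k is odd
  have hrelk : v^2 - 2*X*u*v - u^2 = -(X^2+1)^2 := by
    rw [hun, hvn]
    have := hpell n
    rw [Odd.neg_one_pow hodd] at this
    linear_combination this
  -- the key identity
  have hkey : x^3 - y^2 = C (-27) * ((X^2+1)^2 * (2*v - 2*X*u + (11*X^2 + 11))) := by
    rw [hx, hy, show (C (-27) : Polynomial ℤ) = -27 from by simp]
    linear_combination
      (361 + 342*v + 119*v^2 + 18*v^3 + v^4 + 328*X^2 + 108*X^2*v - 72*X^2*v^2
        - 36*X^2*v^3 - 4*X^2*v^4 + 216*X^3*u + 216*X^3*u*v + 72*X^3*u*v^2 + 8*X^3*u*v^3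
        - 102*X^4 - 54*X^4*v - 6*X^4*v^2 - 68*X^6 - 36*X^6*v - 4*X^6*v^2 + X^8) * hrelk
  -- degree of w := 2*v - 2*X*u + (11*X^2 + 11)
  set w : Polynomial ℤ := 2*v - 2*X*u + (11*X^2 + 11) with hw
  obtain ⟨hdu, hcu⟩ := hdc n
  obtain ⟨hdv, hcv⟩ := hdc (n+1)
  rw [show n+1+2 = n+3 from rfl] at hdv hcv
  rw [← hun] at hdu hcu
  rw [← hvn] at hdv hcv
  have hcw : w.coeff (n+3) = 2^(n+1) := by
    rw [hw, coeff_add, coeff_sub, coeff_ofNat_mul, mul_assoc, coeff_ofNat_mul,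
      show n+3 = (n+2)+1 from rfl, coeff_X_mul, coeff_add, coeff_ofNat_mul]
    rw [show (n+2)+1 = n+3 from rfl] at hcv ⊢
    rw [hcv, hcu]
    simp [coeff_X_pow]
    ring
  have hwne : w ≠ 0 := fun h => by
    rw [h, coeff_zero] at hcw; exact absurd hcw.symm (by positivity)
  have hdw : w.natDegree = n + 3 := by
    refine le_antisymm ?_ (le_natDegree_of_ne_zero (by rw [hcw]; positivity))
    rw [hw]
    refine le_trans (natDegree_add_le _ _) (max_le (le_trans (natDegree_sub_le _ _)
      (max_le ?_ ?_)) ?_)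
    · calc (2*v).natDegree ≤ (2:Polynomial ℤ).natDegree + v.natDegree := natDegree_mul_le
        _ ≤ n+3 := by
          have h2d : (2:Polynomial ℤ).natDegree = 0 := by simp
          omega
    · calc (2*X*u).natDegree ≤ (2*X:Polynomial ℤ).natDegree + u.natDegree := natDegree_mul_le
        _ ≤ n+3 := by
          have : (2*X:Polynomial ℤ).natDegree ≤ 1 := by compute_degree
          omega
    · have : (11*X^2 + 11 : Polynomial ℤ).natDegree ≤ 2 := by compute_degree
      omega
  have hXne : ((X^2+1:Polynomial ℤ))^2 ≠ 0 := by
    apply pow_ne_zero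
    intro h; simpa [coeff_one] using congrArg (fun q => coeff q 2) h
  rw [hkey, natDegree_C_mul (by norm_num : (-27:ℤ) ≠ 0), natDegree_mul hXne hwne,
    show ((X^2+1:Polynomial ℤ)^2).natDegree = 4 from by compute_degree!, hdw]
  omega
end

section
/- If z and w are integers with z^2 + 1 = 5w^2, then X = z^2+6z+4 satisfies X^3 - 5(w(z^2+9z+19))^2 = -27(2z+11). -/
theorem stmt_17 (z w : ℤ) (h : z^2 + 1 = 5 * w^2) :
    (z^2 + 6*z + 4)^3 - 5 * (w * (z^2 + 9*z + 19))^2 = -27 * (2*z + 11) := by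
  linear_combination ((z^2 + 9*z + 19)^2) * h
end

section
/- For nonconstant complex polynomials x, y with x^3 ≠ y^2, one has deg(x^3 - y^2) ≥ (1/2)deg(x) + 1 (Davenport's inequality). -/
open Polynomial

-- Auxiliary: natDegree and leading coefficient of the derivative over ℂ.
lemma deriv_natDegree_coeff (p : Polynomial ℂ) (hp : p.natDegree ≠ 0) :
    p.derivative.natDegree = p.natDegree - 1 ∧
      p.derivative.leadingCoeff = p.leadingCoeff * p.natDegree := by
  have hp0 : p ≠ 0 := fun h => hp (by simp [h])
  have hidx : p.natDegree - 1 + 1 = p.natDegree := Nat.succ_pred_eq_of_pos (Nat.pos_of_ne_zero hp)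
  have hcast : ((p.natDegree - 1 : ℕ) : ℂ) + 1 = (p.natDegree : ℂ) := by exact_mod_cast hidx
  have hc : p.derivative.coeff (p.natDegree - 1) = p.coeff p.natDegree * p.natDegree := by
    rw [Polynomial.coeff_derivative, hidx]
    push_cast [hcast]
    ring
  have hlc : p.coeff p.natDegree ≠ 0 := Polynomial.leadingCoeff_ne_zero.mpr hp0
  have hne : p.derivative.coeff (p.natDegree - 1) ≠ 0 := by
    rw [hc]
    exact mul_ne_zero hlc (by exact_mod_cast hp)
  have hge : p.natDegree - 1 ≤ p.derivative.natDegree := Polynomial.le_natDegree_of_ne_zero hne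
  have hle : p.derivative.natDegree ≤ p.natDegree - 1 := Polynomial.natDegree_derivative_le p
  have hdeg : p.derivative.natDegree = p.natDegree - 1 := le_antisymm hle hge
  refine ⟨hdeg, ?_⟩
  rw [Polynomial.leadingCoeff, hdeg, hc]
  rfl

theorem stmt_18 (x y : Polynomial ℂ)
    (hx : 0 < x.natDegree) (hy : 0 < y.natDegree) (hne : x^3 ≠ y^2) :
    (1/2 : ℝ) * x.natDegree + 1 ≤ ((x^3 - y^2).natDegree : ℝ) := by
  have hx0 : x ≠ 0 := fun h => by simp [h] at hx
  have hy0 : y ≠ 0 := fun h => by simp [h] at hy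
  have hF0 : x ^ 3 - y ^ 2 ≠ 0 := sub_ne_zero.mpr hne
  set m := x.natDegree with hm
  set n := y.natDegree with hn
  set F := x ^ 3 - y ^ 2 with hF
  have hx3 : (x ^ 3).natDegree = 3 * m := by rw [Polynomial.natDegree_pow]
  have hy2 : (y ^ 2).natDegree = 2 * n := by rw [Polynomial.natDegree_pow]
  -- the key polynomial identity
  have hFd : F.derivative = 3 * x ^ 2 * x.derivative - 2 * y * y.derivative := by
    simp [hF, Polynomial.derivative_pow, map_ofNat]
  have hid : x * F.derivative - 3 * x.derivative * F
      = y * (3 * x.derivative * y - 2 * x * y.derivative) := by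
    rw [hFd, hF]; ring
  -- helper to finish from dF = 3m
  have finish3m : F.natDegree = 3 * m → (1/2 : ℝ) * m + 1 ≤ (F.natDegree : ℝ) := by
    intro h
    rw [h]
    have : (1 : ℝ) ≤ (m : ℝ) := by exact_mod_cast hx
    push_cast
    linarith
  by_cases hcase : 2 * n < 3 * m
  · -- degrees don't match: deg F = 3m
    apply finish3m
    have : (y ^ 2).natDegree < (x ^ 3).natDegree := by omega
    rw [hF, Polynomial.natDegree_sub_eq_left_of_natDegree_lt this, hx3]
  · push_neg at hcase
    by_cases hk : 3 * x.derivative * y - 2 * x * y.derivative = 0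
    · -- Wronskian vanishes: x F' = 3 x' F, leading coefficient comparison gives dF = 3m
      apply finish3m
      have heq : x * F.derivative = 3 * x.derivative * F := by
        have h' := hid
        rw [hk, mul_zero, sub_eq_zero] at h'
        exact h'
      have hxd := deriv_natDegree_coeff x (by omega)
      have hlcx : x.leadingCoeff ≠ 0 := Polynomial.leadingCoeff_ne_zero.mpr hx0
      have hlcF : F.leadingCoeff ≠ 0 := Polynomial.leadingCoeff_ne_zero.mpr hF0
      have hxd0 : x.derivative ≠ 0 := by
        intro h
        have h2 := hxd.2
        rw [h] at h2
        have h3 : x.leadingCoeff * (m : ℂ) ≠ 0 :=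
          mul_ne_zero hlcx (by exact_mod_cast (by omega : m ≠ 0))
        exact h3 (by simpa using h2.symm)
      have h3ne : (3 : ℂ[X]) ≠ 0 := by norm_num
      have hdF : F.natDegree ≠ 0 := by
        intro h
        obtain ⟨c, hc⟩ := Polynomial.natDegree_eq_zero.mp h
        have hFd0 : F.derivative = 0 := by rw [← hc]; simp
        rw [hFd0, mul_zero] at heq
        exact (mul_ne_zero (mul_ne_zero h3ne hxd0) hF0) heq.symm
      have hFdnd := deriv_natDegree_coeff F hdF
      -- take leading coefficients of both sides of heq
      have hlc := congrArg Polynomial.leadingCoeff heq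
      have h30 : (3 : ℂ[X]).leadingCoeff = 3 := by
        rw [← map_ofNat (C : ℂ →+* ℂ[X]) 3, leadingCoeff_C]
      have h3 : (3 * x.derivative * F).leadingCoeff
          = 3 * x.derivative.leadingCoeff * F.leadingCoeff := by
        rw [Polynomial.leadingCoeff_mul, Polynomial.leadingCoeff_mul, h30]
      rw [Polynomial.leadingCoeff_mul, h3, hxd.2, hFdnd.2] at hlc
      have h4 : x.leadingCoeff * F.leadingCoeff * (F.natDegree : ℂ)
          = x.leadingCoeff * F.leadingCoeff * ((3 * m : ℕ) : ℂ) := by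
        push_cast
        linear_combination hlc
      have h5 : (F.natDegree : ℂ) = ((3 * m : ℕ) : ℂ) :=
        mul_left_cancel₀ (mul_ne_zero hlcx hlcF) h4
      exact_mod_cast h5
    · -- Wronskian nonzero: degree bound
      have hnle : n ≤ (y * (3 * x.derivative * y - 2 * x * y.derivative)).natDegree := by
        rw [Polynomial.natDegree_mul hy0 hk]
        omega
      rw [← hid] at hnle
      have hb1 : (x * F.derivative).natDegree ≤ m + F.derivative.natDegree :=
        Polynomial.natDegree_mul_le
      have hb1' : F.derivative.natDegree ≤ F.natDegree - 1 := Polynomial.natDegree_derivative_le F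
      have hb2 : (3 * x.derivative * F).natDegree
          ≤ (3 * x.derivative).natDegree + F.natDegree := Polynomial.natDegree_mul_le
      have hb2' : (3 * x.derivative).natDegree ≤ x.derivative.natDegree := by
        calc (3 * x.derivative).natDegree ≤ (3 : ℂ[X]).natDegree + x.derivative.natDegree :=
              Polynomial.natDegree_mul_le
          _ = x.derivative.natDegree := by simp
      have hb2'' : x.derivative.natDegree ≤ m - 1 := Polynomial.natDegree_derivative_le x
      have hsub : (x * F.derivative - 3 * x.derivative * F).natDegree
          ≤ max (x * F.derivative).natDegree (3 * x.derivative * F).natDegree :=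
        Polynomial.natDegree_sub_le _ _
      have key : m + 2 ≤ 2 * F.natDegree := by
        rcases Nat.eq_zero_or_pos F.natDegree with h | h
        · -- F constant: F' = 0, contradiction with degrees
          exfalso
          obtain ⟨c, hc⟩ := Polynomial.natDegree_eq_zero.mp h
          have hFd0 : F.derivative = 0 := by rw [← hc]; simp
          rw [hFd0, mul_zero, zero_sub, Polynomial.natDegree_neg] at hnle
          have := hnle.trans hb2
          omega
        · omega
      have h1 : (1 : ℝ) ≤ (m : ℝ) := by exact_mod_cast hx
      have h2 : (m : ℝ) + 2 ≤ 2 * (F.natDegree : ℝ) := by exact_mod_cast key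
      linarith
end
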